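/- arXiv:1212.3820 — 4 statements merged into one kernel-verified Lean document; each statement's English description precedes it below -/
import Mathlib

section
/- Let {f_k} be a sequence of C¹ maps f_k : I₀ → I₀ on a compact interval, which is C¹-uniformly equicontinuous and C¹-uniformly bounded (there is Γ with |f_k(x)|, |f_k'(x)| ≤ Γ for all k and x). Fix λ > 0. Then for every γ > 0 there exists ε > 0 (independent of n) such that for all n and all x with (1/n) log |D(f_{n-1} ∘ ⋯ ∘ f_0)(x)| > λ, the frequency of visits of the orbit x, f^1(x), …, f^{n-1}(x) to the ε-neighborhood of the critical sets is less than γ; that is, (1/n) · #{0 ≤ j < n : dist(f^j(x), 𝒞_j) < ε} < γ. -/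
open Set

noncomputable section

/-- `comp f n = f_{n-1} ∘ ⋯ ∘ f_0`, with `comp f 0 = id`. -/
def comp (f : ℕ → ℝ → ℝ) : ℕ → ℝ → ℝ
  | 0 => id
  | (n + 1) => f n ∘ comp f n

/-- `Dcomp f n x = ∏_{j<n} f_j'(f^j(x))`, the derivative of `f^n` at `x` by the chain rule. -/
def Dcomp (f : ℕ → ℝ → ℝ) (n : ℕ) (x : ℝ) : ℝ :=
  ∏ j ∈ Finset.range n, deriv (f j) (comp f j x)

/-- points with exponential derivative growth visit small
neighborhoods of the critical sets with small frequency. -/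
theorem small_frequency_of_visits_to_critical_neighborhood
    (a b Γ lam γ : ℝ) (hab : a ≤ b) (f : ℕ → ℝ → ℝ)
    (hC1 : ∀ k, ContDiff ℝ 1 (f k))
    (hmaps : ∀ k, MapsTo (f k) (Icc a b) (Icc a b))
    (hequi : ∀ ζ > (0 : ℝ), ∃ ε > (0 : ℝ), ∀ k, ∀ x ∈ Icc a b, ∀ y ∈ Icc a b,
      |x - y| < ε → |f k x - f k y| < ζ ∧ |deriv (f k) x - deriv (f k) y| < ζ)
    (hbdd : ∀ k, ∀ x ∈ Icc a b, |f k x| ≤ Γ ∧ |deriv (f k) x| ≤ Γ)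
    (hlam : 0 < lam) (hγ : 0 < γ) :
    ∃ ε > (0 : ℝ), ∀ n : ℕ, 0 < n → ∀ x ∈ Icc a b,
      lam < (1 / (n : ℝ)) * Real.log |Dcomp f n x| →
      (Set.ncard {j : ℕ | j < n ∧ ∃ c ∈ Icc a b,
          deriv (f j) c = 0 ∧ |comp f j x - c| < ε} : ℝ) < γ * n := by
  classical
  set M := max Γ 1 with hM
  set B := Real.log M with hBdef
  have hM1 : (1 : ℝ) ≤ M := le_max_right _ _
  have hB0 : 0 ≤ B := Real.log_nonneg hM1
  set ζ := Real.exp (min 0 ((lam - B) / γ)) with hζdef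
  have hζpos : 0 < ζ := Real.exp_pos _
  have hlogζ : Real.log ζ = min 0 ((lam - B) / γ) := Real.log_exp _
  obtain ⟨ε, hε, hεprop⟩ := hequi ζ hζpos
  refine ⟨ε, hε, ?_⟩
  intro n hn x hx hlog
  by_contra hcon
  push_neg at hcon
  have hnR : (0 : ℝ) < (n : ℝ) := by exact_mod_cast hn
  have hcomp : ∀ j, comp f j x ∈ Icc a b := by
    intro j
    induction j with
    | zero => exact hx
    | succ j ih => exact hmaps j ih
  set pred : ℕ → Prop := fun j => ∃ c ∈ Icc a b,
      deriv (f j) c = 0 ∧ |comp f j x - c| < ε with hpred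
  set T := (Finset.range n).filter pred with hT
  have hset : {j : ℕ | j < n ∧ pred j} = (↑T : Set ℕ) := by
    ext j
    simp [hT, Finset.mem_filter, Finset.mem_range]
  rw [hset, Set.ncard_coe_finset] at hcon
  set T' := (Finset.range n).filter (fun j => ¬ pred j) with hT'
  set g : ℕ → ℝ := fun j => |deriv (f j) (comp f j x)| with hg
  -- bounds on factors
  have hgT : ∀ j ∈ T, g j ≤ ζ := by
    intro j hj
    obtain ⟨-, c, hc, hdc, hclose⟩ := Finset.mem_filter.mp hj
    have := (hεprop j (comp f j x) (hcomp j) c hc hclose).2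
    rw [hdc, sub_zero] at this
    exact this.le
  have hgT' : ∀ j ∈ T', g j ≤ M := by
    intro j _
    exact le_trans (hbdd j _ (hcomp j)).2 (le_max_left _ _)
  have h1 : ∏ j ∈ T, g j ≤ ζ ^ T.card := by
    calc ∏ j ∈ T, g j ≤ ∏ _j ∈ T, ζ :=
          Finset.prod_le_prod (fun j _ => abs_nonneg _) hgT
      _ = ζ ^ T.card := Finset.prod_const ζ
  have h2 : ∏ j ∈ T', g j ≤ M ^ T'.card := by
    calc ∏ j ∈ T', g j ≤ ∏ _j ∈ T', M :=
          Finset.prod_le_prod (fun j _ => abs_nonneg _) hgT'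
      _ = M ^ T'.card := Finset.prod_const M
  have habsD : |Dcomp f n x| = ∏ j ∈ Finset.range n, g j := by
    simp [Dcomp, hg, Finset.abs_prod]
  have hsplit : ∏ j ∈ Finset.range n, g j = (∏ j ∈ T, g j) * ∏ j ∈ T', g j :=
    (Finset.prod_filter_mul_prod_filter_not (Finset.range n) pred g).symm
  have hDle : |Dcomp f n x| ≤ ζ ^ T.card * M ^ T'.card := by
    rw [habsD, hsplit]
    exact mul_le_mul h1 h2 (Finset.prod_nonneg fun j _ => abs_nonneg _)
      (pow_nonneg hζpos.le _)
  -- handle |Dcomp| = 0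
  rcases eq_or_lt_of_le (abs_nonneg (Dcomp f n x)) with h0 | hDpos
  · rw [← h0, Real.log_zero, mul_zero] at hlog
    exact absurd hlog (not_lt.mpr hlam.le)
  -- log estimates
  have hRHSpos : 0 < ζ ^ T.card * M ^ T'.card :=
    mul_pos (pow_pos hζpos _) (pow_pos (lt_of_lt_of_le zero_lt_one hM1) _)
  have hlogle : Real.log |Dcomp f n x| ≤
      (T.card : ℝ) * Real.log ζ + (T'.card : ℝ) * B := by
    calc Real.log |Dcomp f n x| ≤ Real.log (ζ ^ T.card * M ^ T'.card) :=
          Real.log_le_log hDpos hDle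
      _ = (T.card : ℝ) * Real.log ζ + (T'.card : ℝ) * B := by
          rw [Real.log_mul (pow_pos hζpos _).ne' (pow_pos (lt_of_lt_of_le zero_lt_one hM1) _).ne',
            Real.log_pow, Real.log_pow, hBdef]
  have hlogζ0 : Real.log ζ ≤ 0 := by rw [hlogζ]; exact min_le_left _ _
  have hlogζ2 : Real.log ζ ≤ (lam - B) / γ := by rw [hlogζ]; exact min_le_right _ _
  have hcard1 : (T.card : ℝ) * Real.log ζ ≤ γ * n * Real.log ζ :=
    mul_le_mul_of_nonpos_right hcon hlogζ0
  have hcard2 : γ * n * Real.log ζ ≤ (n : ℝ) * (lam - B) := by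
    calc γ * n * Real.log ζ ≤ γ * n * ((lam - B) / γ) :=
          mul_le_mul_of_nonneg_left hlogζ2 (by positivity)
      _ = (n : ℝ) * (lam - B) := by field_simp
  have hT'le : (T'.card : ℝ) ≤ n := by
    exact_mod_cast le_trans (Finset.card_filter_le _ _) (Nat.le_of_eq (Finset.card_range n))
  have hfinal : Real.log |Dcomp f n x| ≤ (n : ℝ) * lam := by
    have : (T'.card : ℝ) * B ≤ (n : ℝ) * B := mul_le_mul_of_nonneg_right hT'le hB0
    nlinarith [hlogle, hcard1, hcard2]
  have : (1 / (n : ℝ)) * Real.log |Dcomp f n x| ≤ lam := by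
    rw [one_div, inv_mul_le_iff₀ hnR]
    linarith [hfinal]
  linarith
end
end

section
/- Suppose for Lebesgue almost every x ∈ I₀, liminf_{n→∞} (1/n) log |Df^n(x)| ≥ λ > 0, where f^n = f_{n-1} ∘ ⋯ ∘ f_0 is a composition of C¹-uniformly equicontinuous and C¹-uniformly bounded maps f_k : I₀ → I₀. Then for every γ > 0 there exists ε > 0 such that for Lebesgue almost every x, limsup_{n→∞} (1/n) Σ_{j=0}^{n-1} χ_{V_ε𝒞}(f^j(x)) < γ, where χ_{V_ε𝒞}(f^j(x)) = 1 if dist(f^j(x), 𝒞_j) < ε and 0 otherwise. -/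
open Set MeasureTheory Filter

noncomputable section

/-!
Along the orbit of a typical point the derivative `Df^n` eventually exceeds `1` in absolute
value, since its exponential growth rate is positive. By equicontinuity of the derivatives there
is `ε > 0` such that `|f_j'| ≤ e^{-K}` on the `ε`-neighbourhood of `𝒞_j`, while `|f_j'| ≤ e^L`
everywhere, with `e^L = max Γ 1`. If `N` of the first `n` iterates visit these neighbourhoods,
then `1 < |Df^n| ≤ e^{nL - NK}`, so `N / n < L / K`, which is below `γ` once `K = (L + 1) / γ`.
-/

theorem comp_mapsTo {f : ℕ → ℝ → ℝ} {s : Set ℝ} (hf : ∀ k, MapsTo (f k) s s) :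
    ∀ n, MapsTo (comp f n) s s
  | 0 => mapsTo_id s
  | n + 1 => (hf n).comp (comp_mapsTo hf n)

theorem eventually_lt_of_nonneg_of_lt_liminf {α : Type*} {l : Filter α} {u : α → ℝ} {b : ℝ}
    (hb : 0 ≤ b) (h : b < liminf u l) : ∀ᶠ a in l, b < u a := by
  by_cases hu : l.IsBoundedUnder (· ≥ ·) u
  · exact eventually_lt_of_lt_liminf h hu
  · -- an unbounded-below real `liminf` is the junk value `sSup ∅ = 0`
    have hempty : {c | ∀ᶠ a in l, c ≤ u a} = ∅ :=
      eq_empty_of_forall_notMem fun c hc => hu ⟨c, hc⟩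
    rw [liminf_eq, hempty, Real.sSup_empty] at h
    exact absurd h hb.not_gt

theorem eventually_one_lt_of_pos_liminf_log {u : ℕ → ℝ} (hu : ∀ n, 0 ≤ u n)
    (h : 0 < liminf (fun n : ℕ => (1 / (n : ℝ)) * Real.log (u n)) atTop) :
    ∀ᶠ n in atTop, 1 < u n := by
  filter_upwards [eventually_lt_of_nonneg_of_lt_liminf le_rfl h] with n hn
  have hlog : 0 < Real.log (u n) := pos_of_mul_pos_right hn (by positivity)
  exact (Real.log_pos_iff (hu n)).mp hlog

theorem card_filter_mul_lt_of_one_lt_abs_prod {ι : Type*} {s : Finset ι} {g : ι → ℝ}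
    {P : ι → Prop} [DecidablePred P] {K L : ℝ} (hL : 0 ≤ L)
    (hP : ∀ j ∈ s, P j → |g j| ≤ Real.exp (-K)) (hnP : ∀ j ∈ s, ¬P j → |g j| ≤ Real.exp L)
    (h : 1 < |∏ j ∈ s, g j|) : ((s.filter P).card : ℝ) * K < s.card * L := by
  have hbound : ∀ j ∈ s, |g j| ≤ Real.exp (if P j then -K else L) := by
    intro j hj
    split_ifs with hj'
    exacts [hP j hj hj', hnP j hj hj']
  have hexp : 1 < Real.exp (∑ j ∈ s, if P j then -K else L) := by
    calc 1 < |∏ j ∈ s, g j| := h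
      _ = ∏ j ∈ s, |g j| := Finset.abs_prod s g
      _ ≤ ∏ j ∈ s, Real.exp (if P j then -K else L) :=
        Finset.prod_le_prod (fun j _ => abs_nonneg _) hbound
      _ = _ := (Real.exp_sum s _).symm
  have hsum : ∑ j ∈ s, (if P j then -K else L) =
      -((s.filter P).card * K) + (s.filter (¬P ·)).card * L := by
    simp [Finset.sum_ite]
  have hcard : ((s.filter (¬P ·)).card : ℝ) ≤ s.card := by
    exact_mod_cast Finset.card_filter_le s _
  rw [Real.one_lt_exp_iff, hsum] at hexp
  linarith [mul_le_mul_of_nonneg_right hcard hL]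

theorem limsup_inv_mul_le_of_eventually_mul_lt {N : ℕ → ℝ} (hN : ∀ n, 0 ≤ N n) {K L : ℝ}
    (hK : 0 < K) (h : ∀ᶠ n in atTop, N n * K < n * L) :
    limsup (fun n : ℕ => (1 / (n : ℝ)) * N n) atTop ≤ L / K := by
  refine limsup_le_of_le (isCoboundedUnder_le_of_le atTop (x := 0) fun n => by
    have := hN n; positivity) ?_
  filter_upwards [h, eventually_gt_atTop 0] with n hn hn0
  have hn0' : (0 : ℝ) < n := by exact_mod_cast hn0
  rw [one_div_mul_eq_div, div_le_div_iff₀ hn0' hK]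
  linarith

theorem ncard_setOf_lt_and (P : ℕ → Prop) [DecidablePred P] (n : ℕ) :
    {j | j < n ∧ P j}.ncard = ((Finset.range n).filter P).card := by
  rw [← Set.ncard_coe_finset]
  congr 1
  ext j
  simp

theorem ae_small_asymptotic_frequency_of_visits_general
    (a b Γ lam : ℝ) (f : ℕ → ℝ → ℝ)
    (hmaps : ∀ k, MapsTo (f k) (Icc a b) (Icc a b))
    (hequi : ∀ ζ > (0 : ℝ), ∃ ε > (0 : ℝ), ∀ k, ∀ x ∈ Icc a b, ∀ y ∈ Icc a b,
      |x - y| < ε → |f k x - f k y| < ζ ∧ |deriv (f k) x - deriv (f k) y| < ζ)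
    (hbdd : ∀ k, ∀ x ∈ Icc a b, |f k x| ≤ Γ ∧ |deriv (f k) x| ≤ Γ)
    (hlam : 0 < lam)
    (hlyap : ∀ᵐ x ∂(volume.restrict (Icc a b)),
      lam ≤ liminf (fun n : ℕ => (1 / (n : ℝ)) * Real.log |Dcomp f n x|) atTop) :
    ∀ γ > (0 : ℝ), ∃ ε > (0 : ℝ), ∀ᵐ x ∂(volume.restrict (Icc a b)),
      limsup (fun n : ℕ => (1 / (n : ℝ)) *
        (Set.ncard {j : ℕ | j < n ∧ ∃ c ∈ Icc a b,
          deriv (f j) c = 0 ∧ |comp f j x - c| < ε} : ℝ)) atTop < γ := by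
  classical
  intro γ hγ
  set L := Real.log (max Γ 1)
  have hL : 0 ≤ L := Real.log_nonneg (le_max_right Γ 1)
  set K := (L + 1) / γ
  obtain ⟨ε, hε, hsmall⟩ := hequi (Real.exp (-K)) (Real.exp_pos _)
  refine ⟨ε, hε, ?_⟩
  filter_upwards [hlyap, ae_restrict_mem measurableSet_Icc] with x hx hxI
  have horbit : ∀ j, comp f j x ∈ Icc a b := fun j => comp_mapsTo hmaps j hxI
  have hgrowth : ∀ᶠ n in atTop, 1 < |Dcomp f n x| :=
    eventually_one_lt_of_pos_liminf_log (fun n => abs_nonneg _) (hlam.trans_le hx)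
  have hvisits : ∀ᶠ n in atTop, (Set.ncard {j : ℕ | j < n ∧ ∃ c ∈ Icc a b,
      deriv (f j) c = 0 ∧ |comp f j x - c| < ε} : ℝ) * K < n * L := by
    filter_upwards [hgrowth] with n hn
    rw [ncard_setOf_lt_and]
    refine (card_filter_mul_lt_of_one_lt_abs_prod hL ?_ ?_ hn).trans_eq ?_
    · rintro j - ⟨c, hc, hc0, hxc⟩
      simpa [hc0] using (hsmall j _ (horbit j) c hc hxc).2.le
    · rintro j - -
      rw [Real.exp_log (by positivity)]
      exact (hbdd j _ (horbit j)).2.trans (le_max_left Γ 1)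
    · rw [Finset.card_range]
  calc _ ≤ L / K := limsup_inv_mul_le_of_eventually_mul_lt (fun n => by positivity)
        (by positivity) hvisits
    _ < γ := by rw [div_lt_iff₀ (by positivity), mul_div_cancel₀ _ hγ.ne']; linarith

/-- if a.e. point has Lyapunov exponent ≥ λ > 0 for the sequence of
compositions, then for every γ > 0 there is ε > 0 such that a.e. point visits the
ε-neighborhood of the critical sets with asymptotic frequency < γ. -/
theorem ae_small_asymptotic_frequency_of_visits
    (a b Γ lam : ℝ) (hab : a ≤ b) (f : ℕ → ℝ → ℝ)
    (hC1 : ∀ k, ContDiff ℝ 1 (f k))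
    (hmaps : ∀ k, MapsTo (f k) (Icc a b) (Icc a b))
    (hequi : ∀ ζ > (0 : ℝ), ∃ ε > (0 : ℝ), ∀ k, ∀ x ∈ Icc a b, ∀ y ∈ Icc a b,
      |x - y| < ε → |f k x - f k y| < ζ ∧ |deriv (f k) x - deriv (f k) y| < ζ)
    (hbdd : ∀ k, ∀ x ∈ Icc a b, |f k x| ≤ Γ ∧ |deriv (f k) x| ≤ Γ)
    (hlam : 0 < lam)
    (hlyap : ∀ᵐ x ∂(volume.restrict (Icc a b)),
      lam ≤ liminf (fun n : ℕ => (1 / (n : ℝ)) * Real.log |Dcomp f n x|) atTop) :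
    ∀ γ > (0 : ℝ), ∃ ε > (0 : ℝ), ∀ᵐ x ∂(volume.restrict (Icc a b)),
      limsup (fun n : ℕ => (1 / (n : ℝ)) *
        (Set.ncard {j : ℕ | j < n ∧ ∃ c ∈ Icc a b,
          deriv (f j) c = 0 ∧ |comp f j x - c| < ε} : ℝ)) atTop < γ :=
  ae_small_asymptotic_frequency_of_visits_general a b Γ lam f hmaps hequi hbdd hlam hlyap
end
end

section
/- Fix δ > 0 and a sequence of C¹ maps f_k : I₀ → I₀ with sup_k #𝒞_k = p < ∞. For binary words (a_1,…,a_s) define C_δ(a_1,…,a_s) = {x ∈ I₀ : r_i(x) ≥ δ if a_i = 1, and 0 < r_i(x) < δ if a_i = 0}. Then for any word (a_1,…,a_s): the number of connected components of C_δ(a_1,…,a_s,0) plus the number of connected components of C_δ(a_1,…,a_s,1) is at most 3(p+1) times the number of connected components of C_δ(a_1,…,a_s). -/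
open Set

noncomputable section

/-- The critical set `𝒞_k` of `f_k` inside the interval `I`. -/
def crit (f : ℕ → ℝ → ℝ) (I : Set ℝ) (k : ℕ) : Set ℝ :=
  {x ∈ I | deriv (f k) x = 0}

/-- `T f I i x`: the maximal (pre)interval in `I` containing `x` such that
`f^j` of it avoids `𝒞_j` for all `j < i`. -/
def T (f : ℕ → ℝ → ℝ) (I : Set ℝ) (i : ℕ) (x : ℝ) : Set ℝ :=
  ⋃₀ {S | S ⊆ I ∧ IsPreconnected S ∧ x ∈ S ∧
      ∀ j < i, ∀ y ∈ S, comp f j y ∉ crit f I j}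

/-- `r f I i x`: the minimum of the lengths of the images under `f^i` of the
two connected components of `T f I i x \ {x}`. -/
def r (f : ℕ → ℝ → ℝ) (I : Set ℝ) (i : ℕ) (x : ℝ) : ℝ :=
  min (Metric.diam (comp f i '' (T f I i x ∩ Iio x)))
      (Metric.diam (comp f i '' (T f I i x ∩ Ioi x)))

/-- The set `C_δ(a_1,…,a_s)` attached to a binary word `w` (here `true = 1`, `false = 0`):
`r_i(x) ≥ δ` at positions with symbol `1`, and `0 < r_i(x) < δ` at positions with symbol `0`. -/
def Cword (f : ℕ → ℝ → ℝ) (I : Set ℝ) (δ : ℝ) (w : List Bool) : Set ℝ :=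
  {x ∈ I | ∀ i < w.length,
    (w.getD i false = true → δ ≤ r f I (i + 1) x) ∧
    (w.getD i false = false → 0 < r f I (i + 1) x ∧ r f I (i + 1) x < δ)}

/-- The number of connected components of a subset of `ℝ`. -/
def compCount (S : Set ℝ) : ℕ :=
  Set.ncard {K : Set ℝ | ∃ y ∈ S, K = connectedComponentIn S y}

/-!
Fix a connected component `K` of `C_δ(w)`, `s = |w|`. All points of `K` avoid the critical sets up
to time `s`, so `f^s` has non-vanishing derivative on `K` and is injective there; hence at most
`p` points of `K` are mapped into `𝒞_s`, and removing them cuts `K` into at most `p + 1` intervals.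
On such an interval `A` the interval `T_{s+1}` is the same for every point, so the left length
`|f^{s+1}(L_{s+1}(x))|` is monotone and the right length antitone in `x ∈ A`. Therefore
`{r_{s+1} ≥ δ}` meets `A` in one interval, while `{0 < r_{s+1} < δ}` meets it in at most two
(where the left, respectively the right, length is below `δ`).

As `ncard` of an infinite set is `0`, the count is controlled through covers by finitely many
preconnected sets, which exist for every word by induction on its length.
-/

def AvoidsCrit (f : ℕ → ℝ → ℝ) (I : Set ℝ) (i : ℕ) (y : ℝ) : Prop :=
  ∀ j < i, comp f j y ∉ crit f I j

def rLeft (f : ℕ → ℝ → ℝ) (I : Set ℝ) (i : ℕ) (x : ℝ) : ℝ :=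
  Metric.diam (comp f i '' (T f I i x ∩ Iio x))

def rRight (f : ℕ → ℝ → ℝ) (I : Set ℝ) (i : ℕ) (x : ℝ) : ℝ :=
  Metric.diam (comp f i '' (T f I i x ∩ Ioi x))

def components (S : Set ℝ) : Set (Set ℝ) :=
  {K | ∃ y ∈ S, K = connectedComponentIn S y}

section

variable {α : Type*} [TopologicalSpace α]

def CoveredByPreconnected (n : ℕ) (S : Set α) : Prop :=
  ∃ 𝒜 : Finset (Set α), 𝒜.card ≤ n ∧ (∀ A ∈ 𝒜, IsPreconnected A) ∧ S = ⋃₀ ↑𝒜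

lemma IsPreconnected.coveredByPreconnected {S : Set α} (h : IsPreconnected S) :
    CoveredByPreconnected 1 S := by
  classical
  exact ⟨{S}, by simp, by simpa using h, by simp⟩

namespace CoveredByPreconnected

variable {m n : ℕ} {S S' : Set α}

lemma mono (h : CoveredByPreconnected m S) (hmn : m ≤ n) : CoveredByPreconnected n S :=
  let ⟨𝒜, h𝒜, hpc, hS⟩ := h
  ⟨𝒜, h𝒜.trans hmn, hpc, hS⟩

lemma union (h : CoveredByPreconnected m S) (h' : CoveredByPreconnected n S') :
    CoveredByPreconnected (m + n) (S ∪ S') := by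
  classical
  obtain ⟨𝒜, h𝒜, hpc, rfl⟩ := h
  obtain ⟨ℬ, hℬ, hpc', rfl⟩ := h'
  refine ⟨𝒜 ∪ ℬ, (Finset.card_union_le _ _).trans (add_le_add h𝒜 hℬ), ?_, by simp [sUnion_union]⟩
  simp only [Finset.mem_union]
  rintro A (hA | hA)
  exacts [hpc A hA, hpc' A hA]

lemma biUnion {ι : Type*} (s : Finset ι) {g : ι → Set α}
    (h : ∀ i ∈ s, CoveredByPreconnected n (g i)) :
    CoveredByPreconnected (s.card * n) (⋃ i ∈ s, g i) := by
  classical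
  induction s using Finset.induction_on with
  | empty => exact ⟨∅, by simp, by simp, by simp⟩
  | insert i s hi ih =>
    rw [Finset.set_biUnion_insert, Finset.card_insert_of_notMem hi, add_one_mul, add_comm]
    exact (h i (s.mem_insert_self i)).union (ih fun j hj => h j (Finset.mem_insert_of_mem hj))

lemma inter_of_forall (h : CoveredByPreconnected n S)
    (hS' : ∀ A ⊆ S, IsPreconnected A → CoveredByPreconnected m (S' ∩ A)) :
    CoveredByPreconnected (n * m) (S' ∩ S) := by
  obtain ⟨𝒜, h𝒜, hpc, rfl⟩ := h
  have h𝒜' := biUnion 𝒜 fun A hA => hS' A (subset_sUnion_of_mem hA) (hpc A hA)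
  rw [sUnion_eq_biUnion, inter_iUnion₂]
  exact h𝒜'.mono (Nat.mul_le_mul_right m h𝒜)

end CoveredByPreconnected

end

namespace CoveredByPreconnected

variable {n : ℕ} {S : Set ℝ}

lemma exists_finset_components_subset (h : CoveredByPreconnected n S) :
    ∃ 𝒦 : Finset (Set ℝ), 𝒦.card ≤ n ∧ components S ⊆ 𝒦 := by
  classical
  obtain ⟨𝒜, h𝒜, hpc, rfl⟩ := h
  refine ⟨𝒜.image fun A => connectedComponentIn (⋃₀ ↑𝒜) (Classical.epsilon (· ∈ A)),
    Finset.card_image_le.trans h𝒜, ?_⟩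
  rintro _ ⟨y, ⟨A, hA, hyA⟩, rfl⟩
  have hεA : Classical.epsilon (· ∈ A) ∈ A := Classical.epsilon_spec ⟨y, hyA⟩
  refine Finset.mem_image.mpr ⟨A, hA, (connectedComponentIn_eq ?_).symm⟩
  exact (hpc A hA).subset_connectedComponentIn hyA (subset_sUnion_of_mem hA) hεA

lemma finite_components (h : CoveredByPreconnected n S) : (components S).Finite :=
  let ⟨𝒦, _, h𝒦⟩ := h.exists_finset_components_subset
  𝒦.finite_toSet.subset h𝒦

lemma compCount_le (h : CoveredByPreconnected n S) : compCount S ≤ n :=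
  let ⟨𝒦, h𝒦n, h𝒦⟩ := h.exists_finset_components_subset
  (ncard_le_ncard h𝒦 𝒦.finite_toSet).trans ((ncard_coe_finset 𝒦).trans_le h𝒦n)

end CoveredByPreconnected

lemma coveredByPreconnected_compCount {S : Set ℝ} (hS : (components S).Finite) :
    CoveredByPreconnected (compCount S) S := by
  refine ⟨hS.toFinset, (ncard_eq_toFinset_card _ hS).ge, ?_, ?_⟩
  · rintro _ hK
    obtain ⟨y, -, rfl⟩ := hS.mem_toFinset.mp hK
    exact isPreconnected_connectedComponentIn
  · ext y
    simp only [Finite.coe_toFinset, mem_sUnion]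
    constructor
    · exact fun hy => ⟨_, ⟨y, hy, rfl⟩, mem_connectedComponentIn hy⟩
    · rintro ⟨_, ⟨z, -, rfl⟩, hy⟩
      exact connectedComponentIn_subset _ _ hy

lemma IsPreconnected.coveredByPreconnected_diff_finset {J : Set ℝ} (hJ : IsPreconnected J)
    (E : Finset ℝ) : CoveredByPreconnected (E.card + 1) (J \ ↑E) := by
  classical
  induction E using Finset.induction_on_max generalizing J with
  | empty => simpa using hJ.coveredByPreconnected
  | insert e E hlt ih =>
    have hJ' := isPreconnected_iff_ordConnected.mp hJ
    -- `e` is the largest removed point, so everything to its left is handled by induction.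
    have hsplit : J \ ↑(insert e E) = J ∩ Ioi e ∪ (J ∩ Iio e) \ ↑E := by
      ext z
      simp only [Finset.coe_insert, mem_sdiff, mem_insert_iff, Finset.mem_coe, mem_union,
        mem_inter_iff, mem_Ioi, mem_Iio]
      grind
    rw [hsplit, Finset.card_insert_of_notMem fun he => (hlt e he).false]
    exact ((hJ'.inter ordConnected_Ioi).isPreconnected.coveredByPreconnected.union
      (ih (hJ'.inter ordConnected_Iio).isPreconnected)).mono (by omega)

lemma IsPreconnected.coveredByPreconnected_diff {J E : Set ℝ} (hJ : IsPreconnected J)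
    (hE : E.Finite) : CoveredByPreconnected (E.ncard + 1) (J \ E) := by
  lift E to Finset ℝ using hE
  simpa using hJ.coveredByPreconnected_diff_finset E

lemma Set.OrdConnected.inter_preimage_of_monotoneOn {α β : Type*} [Preorder α] [Preorder β]
    {A : Set α} {s : Set β} {g : α → β} (hA : A.OrdConnected) (hg : MonotoneOn g A)
    (hs : s.OrdConnected) : (A ∩ g ⁻¹' s).OrdConnected := by
  obtain ⟨u, hu, heq⟩ := hs.preimage_monotoneOn hg
  exact heq ▸ hA.inter hu

lemma Set.OrdConnected.inter_preimage_of_antitoneOn {α β : Type*} [Preorder α] [Preorder β]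
    {A : Set α} {s : Set β} {g : α → β} (hA : A.OrdConnected) (hg : AntitoneOn g A)
    (hs : s.OrdConnected) : (A ∩ g ⁻¹' s).OrdConnected := by
  obtain ⟨u, hu, heq⟩ := hs.preimage_antitoneOn hg
  exact heq ▸ hA.inter hu

lemma injOn_of_deriv_ne_zero {g : ℝ → ℝ} {J : Set ℝ} (hg : Differentiable ℝ g)
    (hJ : Convex ℝ J) (hg' : ∀ x ∈ J, deriv g x ≠ 0) : InjOn g J := by
  rcases hasDerivWithinAt_forall_lt_or_forall_gt_of_forall_ne hJ
      (fun x _ => (hg x).hasDerivAt.hasDerivWithinAt) hg' with hneg | hpos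
  · exact (strictAntiOn_of_deriv_neg hJ hg.continuous.continuousOn
      fun x hx => hneg x (interior_subset hx)).injOn
  · exact (strictMonoOn_of_deriv_pos hJ hg.continuous.continuousOn
      fun x hx => hpos x (interior_subset hx)).injOn

section Orbits

variable {f : ℕ → ℝ → ℝ} {I : Set ℝ}

lemma avoidsCrit_succ_iff {n : ℕ} {x : ℝ} :
    AvoidsCrit f I (n + 1) x ↔ AvoidsCrit f I n x ∧ comp f n x ∉ crit f I n :=
  Nat.forall_lt_succ_right

lemma differentiable_comp (hf : ∀ k, Differentiable ℝ (f k)) : ∀ n, Differentiable ℝ (comp f n)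
  | 0 => differentiable_id
  | n + 1 => (hf n).comp (differentiable_comp hf n)

lemma mapsTo_comp (hmaps : ∀ k, MapsTo (f k) I I) : ∀ n, MapsTo (comp f n) I I
  | 0 => mapsTo_id I
  | n + 1 => (hmaps n).comp (mapsTo_comp hmaps n)

lemma deriv_comp_ne_zero (hf : ∀ k, Differentiable ℝ (f k)) (hmaps : ∀ k, MapsTo (f k) I I)
    {x : ℝ} (hx : x ∈ I) : ∀ {n}, AvoidsCrit f I n x → deriv (comp f n) x ≠ 0
  | 0, _ => by simp [comp]
  | n + 1, h => by
    obtain ⟨h, hn⟩ := avoidsCrit_succ_iff.mp h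
    rw [comp, deriv_comp x (hf n _) (differentiable_comp hf n x)]
    exact mul_ne_zero (fun h0 => hn ⟨mapsTo_comp hmaps n hx, h0⟩)
      (deriv_comp_ne_zero hf hmaps hx h)

lemma injOn_comp (hf : ∀ k, Differentiable ℝ (f k)) (hmaps : ∀ k, MapsTo (f k) I I) {n : ℕ}
    {J : Set ℝ} (hJ : Convex ℝ J) (hJI : J ⊆ I) (hJn : ∀ x ∈ J, AvoidsCrit f I n x) :
    InjOn (comp f n) J :=
  injOn_of_deriv_ne_zero (differentiable_comp hf n) hJ fun x hx =>
    deriv_comp_ne_zero hf hmaps (hJI hx) (hJn x hx)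

end Orbits

section T

variable {f : ℕ → ℝ → ℝ} {I : Set ℝ} {i : ℕ} {x y : ℝ} {S : Set ℝ}

lemma T_subset : T f I i x ⊆ I :=
  sUnion_subset fun _ hS => hS.1

lemma isPreconnected_T : IsPreconnected (T f I i x) :=
  isPreconnected_sUnion x _ (fun _ hS => hS.2.2.1) fun _ hS => hS.2.1

lemma avoidsCrit_of_mem_T (hy : y ∈ T f I i x) : AvoidsCrit f I i y := by
  obtain ⟨S, hS, hyS⟩ := hy
  exact fun j hj => hS.2.2.2 j hj y hyS

lemma subset_T (hSI : S ⊆ I) (hS : IsPreconnected S) (havoid : ∀ z ∈ S, AvoidsCrit f I i z)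
    (hx : x ∈ S) : S ⊆ T f I i x :=
  subset_sUnion_of_mem ⟨hSI, hS, hx, fun j hj z hz => havoid z hz j hj⟩

lemma T_subset_T_of_mem (hy : y ∈ T f I i x) : T f I i x ⊆ T f I i y :=
  subset_T T_subset isPreconnected_T (fun _ => avoidsCrit_of_mem_T) hy

lemma T_eq_of_isPreconnected (hSI : S ⊆ I) (hS : IsPreconnected S)
    (havoid : ∀ z ∈ S, AvoidsCrit f I i z) (hx : x ∈ S) (hy : y ∈ S) :
    T f I i x = T f I i y :=
  (T_subset_T_of_mem (subset_T hSI hS havoid hx hy)).antisymm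
    (T_subset_T_of_mem (subset_T hSI hS havoid hy hx))

lemma T_eq_empty (h : ¬ AvoidsCrit f I i x) : T f I i x = ∅ :=
  sUnion_eq_empty.mpr fun _ hS => (h fun j hj => hS.2.2.2 j hj x hS.2.2.1).elim

lemma avoidsCrit_of_r_pos (h : 0 < r f I i x) : AvoidsCrit f I i x := by
  by_contra hx
  simp [r, T_eq_empty hx] at h

lemma r_eq_min : r f I i x = min (rLeft f I i x) (rRight f I i x) := rfl

lemma monotoneOn_rLeft (hbdd : Bornology.IsBounded (comp f i '' I)) (hSI : S ⊆ I)
    (hS : IsPreconnected S) (havoid : ∀ z ∈ S, AvoidsCrit f I i z) :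
    MonotoneOn (rLeft f I i) S := by
  intro u hu v hv huv
  rw [rLeft, rLeft, T_eq_of_isPreconnected hSI hS havoid hu hv]
  exact Metric.diam_mono (image_mono (inter_subset_inter_right _ (Iio_subset_Iio huv)))
    (hbdd.subset (image_mono (inter_subset_left.trans T_subset)))

lemma antitoneOn_rRight (hbdd : Bornology.IsBounded (comp f i '' I)) (hSI : S ⊆ I)
    (hS : IsPreconnected S) (havoid : ∀ z ∈ S, AvoidsCrit f I i z) :
    AntitoneOn (rRight f I i) S := by
  intro u hu v hv huv
  rw [rRight, rRight, T_eq_of_isPreconnected hSI hS havoid hu hv]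
  exact Metric.diam_mono (image_mono (inter_subset_inter_right _ (Ioi_subset_Ioi huv)))
    (hbdd.subset (image_mono (inter_subset_left.trans T_subset)))

end T

section Cword

variable {f : ℕ → ℝ → ℝ} {I : Set ℝ} {δ : ℝ} {w : List Bool} {x : ℝ}

lemma Cword_nil : Cword f I δ [] = I := by
  simp [Cword]

lemma Cword_subset : Cword f I δ w ⊆ I := fun _ hx => hx.1

lemma mem_Cword_append {c : Bool} :
    x ∈ Cword f I δ (w ++ [c]) ↔ x ∈ Cword f I δ w ∧
      (c = true → δ ≤ r f I (w.length + 1) x) ∧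
      (c = false → 0 < r f I (w.length + 1) x ∧ r f I (w.length + 1) x < δ) := by
  have hlast : (w ++ [c]).getD w.length false = c := by
    rw [List.getD_append_right _ _ _ _ le_rfl, Nat.sub_self, List.getD_cons_zero]
  have hinit : ∀ i < w.length, (w ++ [c]).getD i false = w.getD i false :=
    fun i hi => List.getD_append _ _ _ _ hi
  simp only [Cword, mem_ofPred_eq, List.length_append, List.length_singleton,
    Nat.forall_lt_succ_right, and_assoc]
  rw [hlast]
  refine and_congr_right fun _ => and_congr_left' (forall₂_congr fun i hi => ?_)
  rw [hinit i hi]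

lemma Cword_append_subset {c : Bool} : Cword f I δ (w ++ [c]) ⊆ Cword f I δ w :=
  fun _ hx => (mem_Cword_append.mp hx).1

lemma r_pos_of_mem_Cword (hδ : 0 < δ) (hx : x ∈ Cword f I δ w) {i : ℕ} (hi : i < w.length) :
    0 < r f I (i + 1) x := by
  cases hc : w.getD i false
  · exact ((hx.2 i hi).2 hc).1
  · exact hδ.trans_le ((hx.2 i hi).1 hc)

lemma avoidsCrit_of_mem_Cword (hδ : 0 < δ) (hx : x ∈ Cword f I δ w) :
    AvoidsCrit f I w.length x := fun _ hj =>
  (avoidsCrit_succ_iff.mp (avoidsCrit_of_r_pos (r_pos_of_mem_Cword hδ hx hj))).2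

lemma avoidsCrit_of_mem_Cword_append (hδ : 0 < δ) {c : Bool} (hx : x ∈ Cword f I δ (w ++ [c])) :
    AvoidsCrit f I (w.length + 1) x := by
  simpa using avoidsCrit_of_mem_Cword hδ hx

end Cword

section Extension

variable {f : ℕ → ℝ → ℝ} {I : Set ℝ} {δ : ℝ} {w : List Bool} {A : Set ℝ}

lemma isPreconnected_Cword_append_true_inter (hA : IsPreconnected A) (hAw : A ⊆ Cword f I δ w)
    (hl : MonotoneOn (rLeft f I (w.length + 1)) A)
    (hr : AntitoneOn (rRight f I (w.length + 1)) A) :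
    IsPreconnected (Cword f I δ (w ++ [true]) ∩ A) := by
  have hA' := isPreconnected_iff_ordConnected.mp hA
  have hsplit : Cword f I δ (w ++ [true]) ∩ A =
      (A ∩ rLeft f I (w.length + 1) ⁻¹' Ici δ) ∩ (A ∩ rRight f I (w.length + 1) ⁻¹' Ici δ) := by
    ext z
    simp only [mem_inter_iff, mem_Cword_append, r_eq_min, le_min_iff, mem_preimage, mem_Ici,
      Bool.true_eq_false, false_implies, and_true, forall_const]
    grind
  rw [hsplit]
  exact ((hA'.inter_preimage_of_monotoneOn hl ordConnected_Ici).inter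
    (hA'.inter_preimage_of_antitoneOn hr ordConnected_Ici)).isPreconnected

lemma coveredByPreconnected_two_Cword_append_false_inter (hA : IsPreconnected A)
    (hAw : A ⊆ Cword f I δ w) (hl : MonotoneOn (rLeft f I (w.length + 1)) A)
    (hr : AntitoneOn (rRight f I (w.length + 1)) A) :
    CoveredByPreconnected 2 (Cword f I δ (w ++ [false]) ∩ A) := by
  have hA' := isPreconnected_iff_ordConnected.mp hA
  have hsplit : Cword f I δ (w ++ [false]) ∩ A =
      (A ∩ rLeft f I (w.length + 1) ⁻¹' Ioo 0 δ) ∩ (A ∩ rRight f I (w.length + 1) ⁻¹' Ioi 0) ∪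
      (A ∩ rLeft f I (w.length + 1) ⁻¹' Ioi 0) ∩ (A ∩ rRight f I (w.length + 1) ⁻¹' Ioo 0 δ) := by
    ext z
    simp only [mem_union, mem_inter_iff, mem_Cword_append, r_eq_min, lt_min_iff, min_lt_iff,
      mem_preimage, mem_Ioo, mem_Ioi, Bool.false_eq_true, false_implies, true_and, forall_const]
    grind
  have hl' {s : Set ℝ} (hs : s.OrdConnected) := hA'.inter_preimage_of_monotoneOn hl hs
  have hr' {s : Set ℝ} (hs : s.OrdConnected) := hA'.inter_preimage_of_antitoneOn hr hs
  rw [hsplit]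
  exact ((hl' ordConnected_Ioo).inter (hr' ordConnected_Ioi)).isPreconnected
    |>.coveredByPreconnected.union
      ((hl' ordConnected_Ioi).inter (hr' ordConnected_Ioo)).isPreconnected.coveredByPreconnected

end Extension

section Step

variable {f : ℕ → ℝ → ℝ} {I : Set ℝ} {p : ℕ} {δ : ℝ} {w : List Bool}

lemma coveredByPreconnected_Cword_append_inter (hf : ∀ k, Differentiable ℝ (f k))
    (hmaps : ∀ k, MapsTo (f k) I I) (hcrit : ∀ k, (crit f I k).Finite ∧ (crit f I k).ncard ≤ p)
    (hδ : 0 < δ) {c : Bool} {m : ℕ}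
    (hpiece : ∀ A, IsPreconnected A → A ⊆ Cword f I δ w →
      (∀ z ∈ A, AvoidsCrit f I (w.length + 1) z) →
      CoveredByPreconnected m (Cword f I δ (w ++ [c]) ∩ A))
    {K : Set ℝ} (hK : IsPreconnected K) (hKw : K ⊆ Cword f I δ w) :
    CoveredByPreconnected ((p + 1) * m) (Cword f I δ (w ++ [c]) ∩ K) := by
  set s := w.length
  have hKs : ∀ x ∈ K, AvoidsCrit f I s x := fun x hx => avoidsCrit_of_mem_Cword hδ (hKw hx)
  have hinj : InjOn (comp f s) K := injOn_comp hf hmaps hK.convex (hKw.trans Cword_subset) hKs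
  set E := K ∩ comp f s ⁻¹' crit f I s
  have hEfin : E.Finite := Finite.of_finite_image
    ((hcrit s).1.subset (image_subset_iff.mpr inter_subset_right)) (hinj.mono inter_subset_left)
  have hEcard : E.ncard ≤ p := (ncard_le_ncard_of_injOn _ (fun _ hx => hx.2)
    (hinj.mono inter_subset_left) (hcrit s).1).trans (hcrit s).2
  have hcover : CoveredByPreconnected (p + 1) (K \ E) :=
    (hK.coveredByPreconnected_diff hEfin).mono (by omega)
  have hKE : Cword f I δ (w ++ [c]) ∩ K = Cword f I δ (w ++ [c]) ∩ (K \ E) := by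
    ext z
    refine ⟨fun ⟨hzc, hzK⟩ => ⟨hzc, hzK, fun hzE => ?_⟩, fun ⟨hzc, hzK, _⟩ => ⟨hzc, hzK⟩⟩
    exact (avoidsCrit_succ_iff.mp (avoidsCrit_of_mem_Cword_append hδ hzc)).2 hzE.2
  rw [hKE]
  refine hcover.inter_of_forall fun A hAKE hA =>
    hpiece A hA (hAKE.trans (sdiff_subset.trans hKw)) fun z hz => ?_
  exact avoidsCrit_succ_iff.mpr ⟨hKs z (hAKE hz).1, fun hzc => (hAKE hz).2 ⟨(hAKE hz).1, hzc⟩⟩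

lemma CoveredByPreconnected.Cword_append (hf : ∀ k, Differentiable ℝ (f k))
    (hmaps : ∀ k, MapsTo (f k) I I) (hI : IsCompact I)
    (hcrit : ∀ k, (crit f I k).Finite ∧ (crit f I k).ncard ≤ p) (hδ : 0 < δ) {n : ℕ}
    (h : CoveredByPreconnected n (Cword f I δ w)) :
    CoveredByPreconnected (n * (p + 1)) (Cword f I δ (w ++ [true])) ∧
      CoveredByPreconnected (n * (2 * (p + 1))) (Cword f I δ (w ++ [false])) := by
  have hbdd : Bornology.IsBounded (comp f (w.length + 1) '' I) :=
    (hI.image (differentiable_comp hf _).continuous).isBounded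
  have hCword : ∀ c, Cword f I δ (w ++ [c]) = Cword f I δ (w ++ [c]) ∩ Cword f I δ w :=
    fun c => (inter_eq_left.mpr Cword_append_subset).symm
  constructor
  · rw [hCword, ← mul_one (p + 1)]
    refine h.inter_of_forall fun K hKw hK => coveredByPreconnected_Cword_append_inter hf hmaps
      hcrit hδ (fun A hA hAw hAs => ?_) hK hKw
    have hAI := hAw.trans Cword_subset
    exact (isPreconnected_Cword_append_true_inter hA hAw (monotoneOn_rLeft hbdd hAI hA hAs)
      (antitoneOn_rRight hbdd hAI hA hAs)).coveredByPreconnected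
  · rw [hCword, mul_comm 2]
    refine h.inter_of_forall fun K hKw hK => coveredByPreconnected_Cword_append_inter hf hmaps
      hcrit hδ (fun A hA hAw hAs => ?_) hK hKw
    have hAI := hAw.trans Cword_subset
    exact coveredByPreconnected_two_Cword_append_false_inter hA hAw
      (monotoneOn_rLeft hbdd hAI hA hAs) (antitoneOn_rRight hbdd hAI hA hAs)

lemma exists_coveredByPreconnected_Cword (hf : ∀ k, Differentiable ℝ (f k))
    (hmaps : ∀ k, MapsTo (f k) I I) (hI : IsCompact I) (hI' : IsPreconnected I)
    (hcrit : ∀ k, (crit f I k).Finite ∧ (crit f I k).ncard ≤ p) (hδ : 0 < δ) (w : List Bool) :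
    ∃ n, CoveredByPreconnected n (Cword f I δ w) := by
  induction w using List.reverseRecOn with
  | nil => exact ⟨1, Cword_nil ▸ hI'.coveredByPreconnected⟩
  | append_singleton w c ih =>
    obtain ⟨n, hn⟩ := ih
    obtain ⟨h₁, h₀⟩ := hn.Cword_append hf hmaps hI hcrit hδ
    cases c
    exacts [⟨_, h₀⟩, ⟨_, h₁⟩]

end Step

theorem components_of_extended_word_general
    (a b : ℝ) (f : ℕ → ℝ → ℝ) (p : ℕ)
    (hC1 : ∀ k, ContDiff ℝ 1 (f k))
    (hmaps : ∀ k, MapsTo (f k) (Icc a b) (Icc a b))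
    (hcrit : ∀ k, (crit f (Icc a b) k).Finite ∧ (crit f (Icc a b) k).ncard ≤ p)
    (δ : ℝ) (hδ : 0 < δ) (w : List Bool) :
    compCount (Cword f (Icc a b) δ (w ++ [false])) +
      compCount (Cword f (Icc a b) δ (w ++ [true])) ≤
      3 * (p + 1) * compCount (Cword f (Icc a b) δ w) := by
  have hf : ∀ k, Differentiable ℝ (f k) := fun k => (hC1 k).differentiable one_ne_zero
  obtain ⟨n, hn⟩ :=
    exists_coveredByPreconnected_Cword hf hmaps isCompact_Icc isPreconnected_Icc hcrit hδ w
  obtain ⟨h₁, h₀⟩ := (coveredByPreconnected_compCount hn.finite_components).Cword_append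
    hf hmaps isCompact_Icc hcrit hδ
  linarith [h₀.compCount_le, h₁.compCount_le]

/-- appending one symbol at most multiplies the number of connected
components by `3(p+1)`. -/
theorem components_of_extended_word
    (a b : ℝ) (hab : a ≤ b) (f : ℕ → ℝ → ℝ) (p : ℕ)
    (hC1 : ∀ k, ContDiff ℝ 1 (f k))
    (hmaps : ∀ k, MapsTo (f k) (Icc a b) (Icc a b))
    (hcrit : ∀ k, (crit f (Icc a b) k).Finite ∧ (crit f (Icc a b) k).ncard ≤ p)
    (δ : ℝ) (hδ : 0 < δ) (w : List Bool) :
    compCount (Cword f (Icc a b) δ (w ++ [false])) +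
      compCount (Cword f (Icc a b) δ (w ++ [true])) ≤
      3 * (p + 1) * compCount (Cword f (Icc a b) δ w) :=
  components_of_extended_word_general a b f p hC1 hmaps hcrit δ hδ w
end
end

section
/- Existence of an absolutely continuous invariant measure from a uniformly absolutely continuous sequence: Let φ : M → M be a measurable map on a compact metric space M with a reference measure Leb, and let μ_n = (1/n)Σ_{i=0}^{n-1} φ^i_* Leb. Suppose μ_n = ν_n + η_n where the ν_n are absolutely continuous with densities uniformly bounded by some constant, and ν_n(M) ≥ b > 0 for all large n. If along a subsequence μ_{n_k} → μ, ν_{n_k} → ν, η_{n_k} → η weakly, and μ is φ-invariant, write η = η^{ac} + η^s (Lebesgue decomposition) and assume φ_* preserves both the class of absolutely continuous and the class of singular measures. Then ν + η^{ac} is a nonzero absolutely continuous φ-invariant measure. -/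
/-!
The densities of the `νₙ` are bounded by `K`, so `νₙ ≤ K • Leb`; by the portmanteau theorem this
bound passes to the weak limit on open sets, hence by outer regularity of `Leb` on all sets, so
`ν ≪ Leb` and `ν(M) ≥ b`. Writing `η = ηˢ + ηᵃᶜ`, the invariant measure `μ = ηˢ + (ν + ηᵃᶜ)` and
`φ_* μ = φ_* ηˢ + φ_* (ν + ηᵃᶜ)` are two Lebesgue decompositions of `μ`, so by uniqueness
`φ_* (ν + ηᵃᶜ) = ν + ηᵃᶜ`.
-/

open MeasureTheory Filter Topology
open scoped ENNReal

namespace MeasureTheory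

variable {Ω : Type*} [MeasurableSpace Ω]

lemma withDensity_le_smul_of_le {μ : Measure Ω} {f : Ω → ℝ≥0∞} {c : ℝ≥0∞} (hf : ∀ x, f x ≤ c) :
    μ.withDensity f ≤ c • μ := by
  simpa only [withDensity_const] using withDensity_mono (μ := μ) (Eventually.of_forall hf)

lemma Measure.le_of_forall_isOpen_le [TopologicalSpace Ω] {μ ν : Measure Ω} [ν.OuterRegular]
    (h : ∀ U, IsOpen U → μ U ≤ ν U) : μ ≤ ν := by
  refine Measure.le_iff'.2 fun s => ?_
  rw [Set.measure_eq_iInf_isOpen s ν]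
  exact le_iInf₂ fun U hsU => le_iInf fun hU => (measure_mono hsU).trans (h U hU)

namespace FiniteMeasure

variable [TopologicalSpace Ω] [HasOuterApproxClosed Ω] [OpensMeasurableSpace Ω]
  {ι : Type*} {l : Filter ι} [l.NeBot] {μ : FiniteMeasure Ω} {μs : ι → FiniteMeasure Ω}

lemma le_measure_univ_of_tendsto (hlim : Tendsto μs l (𝓝 μ)) {b : ℝ≥0∞}
    (hb : ∀ᶠ i in l, b ≤ (μs i : Measure Ω) Set.univ) : b ≤ (μ : Measure Ω) Set.univ :=
  (le_limsup_of_frequently_le hb.frequently).trans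
    (limsup_measure_closed_le_of_tendsto hlim isClosed_univ)

lemma measure_isOpen_le_of_tendsto (hlim : Tendsto μs l (𝓝 μ)) {U : Set Ω} (hU : IsOpen U)
    {c : ℝ≥0∞} (hc : ∀ᶠ i in l, (μs i : Measure Ω) U ≤ c) : (μ : Measure Ω) U ≤ c := by
  have hmass : Tendsto (fun i => (μs i : Measure Ω) Set.univ) l
      (𝓝 ((μ : Measure Ω) Set.univ)) := by
    simpa only [ennreal_mass] using ENNReal.tendsto_coe.2 hlim.mass
  -- Total masses converge, and the closed set `Uᶜ` can only gain mass in the limit.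
  have key : (μ : Measure Ω) Set.univ ≤ c + (μ : Measure Ω) Uᶜ := by
    refine ENNReal.le_of_forall_pos_le_add fun ε hε _ => ?_
    have hcompl : ∀ᶠ i in l, (μs i : Measure Ω) Uᶜ < (μ : Measure Ω) Uᶜ + ε :=
      eventually_lt_of_limsup_lt <|
        (limsup_measure_closed_le_of_tendsto hlim hU.isClosed_compl).trans_lt
          (ENNReal.lt_add_right (measure_ne_top _ _) (by exact_mod_cast hε.ne'))
    refine le_of_tendsto hmass ((hc.and hcompl).mono fun i ⟨hiU, hiUc⟩ => ?_)
    calc (μs i : Measure Ω) Set.univ = (μs i : Measure Ω) U + (μs i : Measure Ω) Uᶜ :=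
          (measure_add_measure_compl hU.measurableSet).symm
      _ ≤ c + ((μ : Measure Ω) Uᶜ + ε) := add_le_add hiU hiUc.le
      _ = c + (μ : Measure Ω) Uᶜ + ε := (add_assoc _ _ _).symm
  rwa [← measure_add_measure_compl hU.measurableSet,
    ENNReal.add_le_add_iff_right (measure_ne_top _ _)] at key

lemma toMeasure_le_smul_of_tendsto {L : Measure Ω} [L.OuterRegular] {K : ℝ≥0∞} (hK : K ≠ ∞)
    (hlim : Tendsto μs l (𝓝 μ)) (hle : ∀ᶠ i in l, (μs i : Measure Ω) ≤ K • L) :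
    (μ : Measure Ω) ≤ K • L :=
  have := Measure.OuterRegular.smul L hK
  Measure.le_of_forall_isOpen_le fun U hU =>
    measure_isOpen_le_of_tendsto hlim hU (hle.mono fun _ hi => Measure.le_iff'.1 hi U)

end FiniteMeasure

namespace Measure

variable {L S A : Measure Ω}

lemma eq_withDensity_rnDeriv_add_of_mutuallySingular [HaveLebesgueDecomposition A L]
    (hS : S ⟂ₘ L) (hA : A ≪ L) : A = L.withDensity ((S + A).rnDeriv L) := by
  rw [← eq_withDensity_rnDeriv (measurable_rnDeriv A L) hS (by rw [withDensity_rnDeriv_eq A L hA]),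
    withDensity_rnDeriv_eq A L hA]

lemma map_eq_self_of_map_add_eq [SigmaFinite L] [SigmaFinite A] {φ : Ω → Ω} (hφ : Measurable φ)
    (hS : S ⟂ₘ L) (hA : A ≪ L) (hSφ : S.map φ ⟂ₘ L) (hAφ : A.map φ ≪ L)
    (hinv : (S + A).map φ = S + A) : A.map φ = A := by
  calc A.map φ = L.withDensity ((S.map φ + A.map φ).rnDeriv L) :=
        eq_withDensity_rnDeriv_add_of_mutuallySingular hSφ hAφ
    _ = L.withDensity ((S + A).rnDeriv L) := by rw [← Measure.map_add S A hφ, hinv]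
    _ = A := (eq_withDensity_rnDeriv_add_of_mutuallySingular hS hA).symm

end Measure

end MeasureTheory

theorem acim_from_uniformly_ac_sequence_general
    {M : Type*} [MetricSpace M] [MeasurableSpace M] [BorelSpace M]
    (Leb : Measure M) [IsFiniteMeasure Leb]
    (φ : M → M) (hφ : Measurable φ)
    (νseq : ℕ → Measure M) (ρ : ℕ → M → ℝ≥0∞) (K : ℝ≥0∞) (hK : K ≠ ⊤)
    (hν : ∀ m, νseq m = Leb.withDensity (ρ m))
    (hρ : ∀ m x, ρ m x ≤ K)
    (b : ℝ≥0∞) (hb : 0 < b) (hνb : ∀ᶠ m in atTop, b ≤ νseq m Set.univ)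
    (nk : ℕ → ℕ) (hnk : StrictMono nk)
    (μ ν η : Measure M) [IsFiniteMeasure ν] [IsFiniteMeasure η]
    (hνlim : ∀ f : M → ℝ, Continuous f →
      Tendsto (fun k => ∫ x, f x ∂(νseq (nk k))) atTop (𝓝 (∫ x, f x ∂ν)))
    (hinv : Measure.map φ μ = μ)
    (hμdecomp : μ = ν + η)
    (hac : ∀ ρ' : Measure M, ρ' ≪ Leb → Measure.map φ ρ' ≪ Leb)
    (hsing : ∀ ρ' : Measure M, ρ'.MutuallySingular Leb →
      (Measure.map φ ρ').MutuallySingular Leb) :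
    ν + Leb.withDensity (η.rnDeriv Leb) ≠ 0 ∧
    (ν + Leb.withDensity (η.rnDeriv Leb)) ≪ Leb ∧
    Measure.map φ (ν + Leb.withDensity (η.rnDeriv Leb))
      = ν + Leb.withDensity (η.rnDeriv Leb) := by
  have hνK : ∀ m, νseq m ≤ K • Leb := fun m =>
    (hν m).trans_le (withDensity_le_smul_of_le (hρ m))
  have := Measure.smul_finite Leb hK
  let νF : FiniteMeasure M := ⟨ν, inferInstance⟩
  let νks : ℕ → FiniteMeasure M := fun k => ⟨νseq (nk k), isFiniteMeasure_of_le _ (hνK _)⟩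
  have hweak : Tendsto νks atTop (𝓝 νF) :=
    FiniteMeasure.tendsto_of_forall_integral_tendsto fun f => hνlim f f.continuous
  have hνac : ν ≪ Leb := Measure.absolutelyContinuous_of_le_smul <|
    FiniteMeasure.toMeasure_le_smul_of_tendsto hK hweak (Eventually.of_forall fun _ => hνK _)
  have hνb_lim : b ≤ ν Set.univ :=
    FiniteMeasure.le_measure_univ_of_tendsto hweak (hnk.tendsto_atTop.eventually hνb)
  set A := ν + Leb.withDensity (η.rnDeriv Leb)
  have hAac : A ≪ Leb := hνac.add_left (withDensity_absolutelyContinuous _ _)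
  have hμA : μ = η.singularPart Leb + A := by
    rw [add_left_comm, η.singularPart_add_rnDeriv Leb, hμdecomp]
  have hηs := η.mutuallySingular_singularPart Leb
  refine ⟨fun hA0 => hb.not_ge ?_, hAac, ?_⟩
  · calc b ≤ ν Set.univ := hνb_lim
      _ ≤ A Set.univ := Measure.le_iff'.1 (Measure.le_add_right le_rfl) _
      _ = 0 := by rw [hA0, Measure.coe_zero, Pi.zero_apply]
  · exact Measure.map_eq_self_of_map_add_eq hφ hηs hAac (hsing _ hηs) (hac A hAac) (hμA ▸ hinv)

/-- existence of a nonzero absolutely continuous invariant measure from a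
uniformly absolutely continuous part of the Cesàro averages `μ_n = (1/n)Σ φ^i_* Leb`:
if `μ_n = ν_n + η_n` with `ν_n` of density ≤ K and total mass ≥ b > 0, and along a
subsequence `μ_{n_k} → μ`, `ν_{n_k} → ν`, `η_{n_k} → η` weakly with `μ` invariant,
and pushforward by `φ` preserves absolute continuity and singularity, then
`ν + η^{ac}` is a nonzero absolutely continuous `φ`-invariant measure. -/
theorem acim_from_uniformly_ac_sequence
    {M : Type*} [MetricSpace M] [CompactSpace M] [MeasurableSpace M] [BorelSpace M]
    (Leb : Measure M) [IsFiniteMeasure Leb]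
    (φ : M → M) (hφ : Measurable φ)
    (νseq ηseq : ℕ → Measure M) (ρ : ℕ → M → ℝ≥0∞) (K : ℝ≥0∞) (hK : K ≠ ⊤)
    (hν : ∀ m, νseq m = Leb.withDensity (ρ m))
    (hρ : ∀ m x, ρ m x ≤ K)
    (hdecomp : ∀ m : ℕ, ((m : ℝ≥0∞))⁻¹ • (∑ i ∈ Finset.range m, Measure.map (φ^[i]) Leb)
      = νseq m + ηseq m)
    (b : ℝ≥0∞) (hb : 0 < b) (hνb : ∀ᶠ m in atTop, b ≤ νseq m Set.univ)
    (nk : ℕ → ℕ) (hnk : StrictMono nk)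
    (μ ν η : Measure M) [IsFiniteMeasure μ] [IsFiniteMeasure ν] [IsFiniteMeasure η]
    (hμlim : ∀ f : M → ℝ, Continuous f →
      Tendsto (fun k => ∫ x, f x ∂(((nk k : ℝ≥0∞))⁻¹ •
        (∑ i ∈ Finset.range (nk k), Measure.map (φ^[i]) Leb))) atTop (𝓝 (∫ x, f x ∂μ)))
    (hνlim : ∀ f : M → ℝ, Continuous f →
      Tendsto (fun k => ∫ x, f x ∂(νseq (nk k))) atTop (𝓝 (∫ x, f x ∂ν)))
    (hηlim : ∀ f : M → ℝ, Continuous f →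
      Tendsto (fun k => ∫ x, f x ∂(ηseq (nk k))) atTop (𝓝 (∫ x, f x ∂η)))
    (hinv : Measure.map φ μ = μ)
    (hμdecomp : μ = ν + η)
    (hac : ∀ ρ' : Measure M, ρ' ≪ Leb → Measure.map φ ρ' ≪ Leb)
    (hsing : ∀ ρ' : Measure M, ρ'.MutuallySingular Leb →
      (Measure.map φ ρ').MutuallySingular Leb) :
    ν + Leb.withDensity (η.rnDeriv Leb) ≠ 0 ∧
    (ν + Leb.withDensity (η.rnDeriv Leb)) ≪ Leb ∧
    Measure.map φ (ν + Leb.withDensity (η.rnDeriv Leb))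
      = ν + Leb.withDensity (η.rnDeriv Leb) :=
  acim_from_uniformly_ac_sequence_general Leb φ hφ νseq ρ K hK hν hρ b hb hνb nk hnk μ ν η hνlim
    hinv hμdecomp hac hsing
end
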